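/- arXiv:2007.15259 — 3 statements merged into one kernel-verified Lean document; each statement's English description precedes it below -/
import Mathlib

section
/- Let u : ℝⁿ → ℝ be a smooth integrable function such that all derivatives up to sufficient order are integrable, and let P be a nonzero polynomial in n variables. If P(∂_{x₁},…,∂_{x_n}) u(x) = 0 for all x ∈ ℝⁿ, then u ≡ 0. -/
open MeasureTheory FourierTransform

/-- The partial derivative in direction `j` of a function on `ℝⁿ`. -/
noncomputable def partialDeriv' {n : ℕ} (j : Fin n) (f : (Fin n → ℝ) → ℝ) :
    (Fin n → ℝ) → ℝ :=
  fun x => fderiv ℝ f x (Pi.single j 1)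

/-- The constant-coefficient differential operator `∂^m = ∏_j ∂_{x_j}^{m j}`
associated to a multi-index `m`. -/
noncomputable def monomialDerivOp {n : ℕ} (m : Fin n →₀ ℕ) (f : (Fin n → ℝ) → ℝ) :
    (Fin n → ℝ) → ℝ :=
  (List.finRange n).foldr (fun j g => (partialDeriv' j)^[m j] g) f

/-- The constant-coefficient differential operator `P(∂_{x₁},…,∂_{x_n})`
obtained by substituting the partial derivatives into the polynomial `P`. -/
noncomputable def polyDerivOp {n : ℕ} (P : MvPolynomial (Fin n) ℝ)
    (f : (Fin n → ℝ) → ℝ) : (Fin n → ℝ) → ℝ :=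
  fun x => ∑ m ∈ P.support, P.coeff m * monomialDerivOp m f x

section Aux
variable {n : ℕ}

theorem contDiff_partialDeriv' {f : (Fin n → ℝ) → ℝ} (hf : ContDiff ℝ (⊤ : ℕ∞) f) (j : Fin n) :
    ContDiff ℝ (⊤ : ℕ∞) (partialDeriv' j f) :=
  (hf.fderiv_right (m := (⊤ : ℕ∞)) (by simp)).clm_apply contDiff_const

theorem contDiff_iter {f : (Fin n → ℝ) → ℝ} (hf : ContDiff ℝ (⊤ : ℕ∞) f) (j : Fin n) (k : ℕ) :
    ContDiff ℝ (⊤ : ℕ∞) ((partialDeriv' j)^[k] f) := by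
  induction k with
  | zero => exact hf
  | succ k ih => rw [Function.iterate_succ_apply']; exact contDiff_partialDeriv' ih j

theorem contDiff_fold {f : (Fin n → ℝ) → ℝ} (m : Fin n →₀ ℕ) (l : List (Fin n))
    (hf : ContDiff ℝ (⊤ : ℕ∞) f) :
    ContDiff ℝ (⊤ : ℕ∞) (l.foldr (fun j g => (partialDeriv' j)^[m j] g) f) := by
  induction l with
  | nil => exact hf
  | cons j t ih => exact contDiff_iter ih j (m j)

theorem contDiff_monomialDerivOp {f : (Fin n → ℝ) → ℝ} (m : Fin n →₀ ℕ)
    (hf : ContDiff ℝ (⊤ : ℕ∞) f) : ContDiff ℝ (⊤ : ℕ∞) (monomialDerivOp m f) :=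
  contDiff_fold m _ hf

-- commutation of partial derivatives
theorem partialDeriv'_comm {f : (Fin n → ℝ) → ℝ} (hf : ContDiff ℝ (⊤ : ℕ∞) f) (i j : Fin n) :
    partialDeriv' i (partialDeriv' j f) = partialDeriv' j (partialDeriv' i f) := by
  have hd : ∀ y, HasFDerivAt f (fderiv ℝ f y) y := fun y =>
    (hf.differentiable (by simp)).differentiableAt.hasFDerivAt
  funext x
  have h2 : HasFDerivAt (fderiv ℝ f) (fderiv ℝ (fderiv ℝ f) x) x :=
    (((hf.fderiv_right (m := (⊤ : ℕ∞)) (by simp)).differentiable (by simp)) x).hasFDerivAt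
  have hsym := second_derivative_symmetric hd h2
  have hap : ∀ v w : Fin n → ℝ,
      fderiv ℝ (fun y => fderiv ℝ f y w) x v = fderiv ℝ (fderiv ℝ f) x v w := by
    intro v w
    have : (fun y => fderiv ℝ f y w) = fun y =>
        (ContinuousLinearMap.apply ℝ ℝ w) (fderiv ℝ f y) := rfl
    rw [this, show (fun y => (ContinuousLinearMap.apply ℝ ℝ w) (fderiv ℝ f y))
        = (ContinuousLinearMap.apply ℝ ℝ w) ∘ (fderiv ℝ f) from rfl,
      ((ContinuousLinearMap.apply ℝ ℝ w).hasFDerivAt.comp x h2).fderiv]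
    rfl
  show fderiv ℝ (fun y => fderiv ℝ f y (Pi.single j 1)) x (Pi.single i 1)
      = fderiv ℝ (fun y => fderiv ℝ f y (Pi.single i 1)) x (Pi.single j 1)
  rw [hap, hap, hsym]


theorem partialDeriv'_iterate_comm {f : (Fin n → ℝ) → ℝ} (hf : ContDiff ℝ (⊤ : ℕ∞) f)
    (i j : Fin n) (k : ℕ) :
    partialDeriv' i ((partialDeriv' j)^[k] f) = (partialDeriv' j)^[k] (partialDeriv' i f) := by
  induction k generalizing f with
  | zero => rfl
  | succ k ih =>
    rw [Function.iterate_succ_apply, Function.iterate_succ_apply,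
      ih (contDiff_partialDeriv' hf j), partialDeriv'_comm hf i j]

theorem fold_congr {f : (Fin n → ℝ) → ℝ} {m₁ m₂ : Fin n →₀ ℕ} {l : List (Fin n)}
    (h : ∀ j ∈ l, m₁ j = m₂ j) :
    l.foldr (fun j g => (partialDeriv' j)^[m₁ j] g) f
      = l.foldr (fun j g => (partialDeriv' j)^[m₂ j] g) f := by
  induction l with
  | nil => rfl
  | cons j t ih =>
    simp only [List.foldr_cons, h j List.mem_cons_self,
      ih fun a ha => h a (List.mem_cons_of_mem j ha)]

theorem fold_add_single {f : (Fin n → ℝ) → ℝ} (hf : ContDiff ℝ (⊤ : ℕ∞) f) (m : Fin n →₀ ℕ)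
    (i : Fin n) : ∀ l : List (Fin n), l.Nodup → i ∈ l →
    l.foldr (fun j g => (partialDeriv' j)^[((m + Finsupp.single i 1 : Fin n →₀ ℕ) j)] g) f
      = partialDeriv' i (l.foldr (fun j g => (partialDeriv' j)^[m j] g) f) := by
  intro l
  induction l with
  | nil => intro _ h; simp at h
  | cons j t ih =>
    intro hnd hmem
    rcases List.mem_cons.1 hmem with rfl | hit
    · have hnotin : i ∉ t := (List.nodup_cons.1 hnd).1
      have ht : t.foldr (fun j g => (partialDeriv' j)^[((m + Finsupp.single i 1 : Fin n →₀ ℕ) j)] g) f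
          = t.foldr (fun j g => (partialDeriv' j)^[m j] g) f := by
        apply fold_congr
        intro a ha
        have : a ≠ i := fun h => hnotin (h ▸ ha)
        simp [Finsupp.single_apply, Ne.symm this]
      simp only [List.foldr_cons, ht]
      rw [show (m + Finsupp.single i 1 : Fin n →₀ ℕ) i = m i + 1 by simp,
        Function.iterate_succ_apply']
    · have hji : j ≠ i := by
        rintro rfl; exact (List.nodup_cons.1 hnd).1 hit
      have ht := ih (List.nodup_cons.1 hnd).2 hit
      simp only [List.foldr_cons, ht]
      rw [show (m + Finsupp.single i 1 : Fin n →₀ ℕ) j = m j by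
          simp [Finsupp.single_apply, Ne.symm hji]]
      exact (partialDeriv'_iterate_comm (contDiff_fold m t hf) i j (m j)).symm

theorem monomialDerivOp_add_single {f : (Fin n → ℝ) → ℝ} (hf : ContDiff ℝ (⊤ : ℕ∞) f)
    (m : Fin n →₀ ℕ) (i : Fin n) :
    monomialDerivOp (m + Finsupp.single i 1) f = partialDeriv' i (monomialDerivOp m f) :=
  fold_add_single hf m i _ (List.nodup_finRange n) (List.mem_finRange i)

theorem monomialDerivOp_zero (f : (Fin n → ℝ) → ℝ) :
    monomialDerivOp (0 : Fin n →₀ ℕ) f = f := by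
  unfold monomialDerivOp
  induction (List.finRange n) with
  | nil => rfl
  | cons j t ih => simp [ih]


open Complex in
noncomputable def toE (g : (Fin n → ℝ) → ℝ) : EuclideanSpace ℝ (Fin n) → ℂ :=
  fun x => (g ((WithLp.equiv 2 (Fin n → ℝ)) x) : ℂ)

theorem integrable_toE {g : (Fin n → ℝ) → ℝ} (hg : Integrable g) :
    Integrable (toE g) := by
  have h1 : Integrable (fun x : Fin n → ℝ => (g x : ℂ)) := hg.ofReal
  have := ((EuclideanSpace.volume_preserving_symm_measurableEquiv_toLp (Fin n)).integrable_comp_emb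
    (MeasurableEquiv.measurableEmbedding _)).2 h1
  exact this

theorem contDiff_toE {g : (Fin n → ℝ) → ℝ} (hg : ContDiff ℝ (⊤ : ℕ∞) g) :
    ContDiff ℝ (⊤ : ℕ∞) (toE g) := by
  have : toE g = (⇑Complex.ofRealCLM) ∘ g ∘
      ⇑(PiLp.continuousLinearEquiv 2 ℝ (fun _ : Fin n => ℝ)) := rfl
  rw [this]
  exact Complex.ofRealCLM.contDiff.comp
    (hg.comp (PiLp.continuousLinearEquiv 2 ℝ (fun _ : Fin n => ℝ)).contDiff)

theorem hasFDerivAt_toE {g : (Fin n → ℝ) → ℝ} (hg : ContDiff ℝ (⊤ : ℕ∞) g)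
    (x : EuclideanSpace ℝ (Fin n)) :
    HasFDerivAt (toE g) (Complex.ofRealCLM ∘L ((fderiv ℝ g ((WithLp.equiv 2 _) x)) ∘L
      ((PiLp.continuousLinearEquiv 2 ℝ (fun _ : Fin n => ℝ)) :
        EuclideanSpace ℝ (Fin n) →L[ℝ] (Fin n → ℝ)))) x := by
  have h1 : HasFDerivAt g (fderiv ℝ g ((WithLp.equiv 2 _) x)) ((WithLp.equiv 2 _) x) :=
    ((hg.differentiable (by simp)) _).hasFDerivAt
  exact Complex.ofRealCLM.hasFDerivAt.comp x
    (h1.comp x (PiLp.continuousLinearEquiv 2 ℝ (fun _ : Fin n => ℝ)).hasFDerivAt)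

theorem fderiv_toE_apply {g : (Fin n → ℝ) → ℝ} (hg : ContDiff ℝ (⊤ : ℕ∞) g)
    (x : EuclideanSpace ℝ (Fin n)) (j : Fin n) :
    fderiv ℝ (toE g) x (EuclideanSpace.single j 1) = toE (partialDeriv' j g) x := by
  rw [(hasFDerivAt_toE hg x).fderiv]
  rfl

theorem fderiv_toE_eq {g : (Fin n → ℝ) → ℝ} (hg : ContDiff ℝ (⊤ : ℕ∞) g) :
    fderiv ℝ (toE g) = fun x => ∑ i, (toE (partialDeriv' i g) x) •
      ((Complex.ofRealCLM) ∘L (EuclideanSpace.proj (𝕜 := ℝ) i)) := by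
  funext x
  apply ContinuousLinearMap.ext
  intro v
  have hv : ∑ i, v i • EuclideanSpace.single i (1:ℝ) = v := by
    simpa [EuclideanSpace.basisFun_apply, EuclideanSpace.basisFun_repr]
      using (EuclideanSpace.basisFun (Fin n) ℝ).sum_repr v
  conv_lhs => rw [← hv]
  rw [map_sum]
  simp [ContinuousLinearMap.map_smul, fderiv_toE_apply hg, Complex.real_smul, mul_comm]

theorem integrable_fderiv_toE {g : (Fin n → ℝ) → ℝ} (hg : ContDiff ℝ (⊤ : ℕ∞) g)
    (hd : ∀ i, Integrable (partialDeriv' i g)) :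
    Integrable (fderiv ℝ (toE g)) := by
  rw [fderiv_toE_eq hg]
  refine integrable_finset_sum Finset.univ (f := fun i x => (toE (partialDeriv' i g) x) •
      ((Complex.ofRealCLM) ∘L (EuclideanSpace.proj (𝕜 := ℝ) i))) ?_
  exact fun i _ => (integrable_toE (hd i)).smul_const _

open Complex Real in
theorem fourier_partial {g : (Fin n → ℝ) → ℝ} (hg : ContDiff ℝ (⊤ : ℕ∞) g)
    (hgi : Integrable g) (hd : ∀ i, Integrable (partialDeriv' i g)) (j : Fin n)
    (ξ : EuclideanSpace ℝ (Fin n)) :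
    𝓕 (toE (partialDeriv' j g)) ξ = (2 * π * Complex.I * (ξ j)) * 𝓕 (toE g) ξ := by
  have hG := integrable_toE hgi
  have hdiff : Differentiable ℝ (toE g) := (contDiff_toE hg).differentiable (by simp)
  have hG' := integrable_fderiv_toE hg hd
  have key := Real.fourier_fderiv hG hdiff hG'
  have h1 : toE (partialDeriv' j g)
      = fun x => fderiv ℝ (toE g) x (EuclideanSpace.single j 1) := by
    funext x; rw [fderiv_toE_apply hg]
  rw [h1, ← Real.fourier_continuousLinearMap_apply hG', key]
  simp only [VectorFourier.fourierSMulRight_apply, ContinuousLinearMap.neg_apply,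
    innerSL_apply_apply, EuclideanSpace.inner_single_right, RCLike.inner_apply, conj_trivial,
    mul_one, neg_smul, smul_neg, neg_neg]
  erw [innerSL_apply_apply, EuclideanSpace.inner_single_right]
  rw [conj_trivial, one_mul, Complex.real_smul, smul_eq_mul]
  ring


open Complex Real in
theorem fourier_monomial {u : (Fin n → ℝ) → ℝ} (hu : ContDiff ℝ (⊤ : ℕ∞) u)
    (hint : ∀ m : Fin n →₀ ℕ, Integrable (monomialDerivOp m u)) :
    ∀ m : Fin n →₀ ℕ, ∀ ξ : EuclideanSpace ℝ (Fin n),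
      𝓕 (toE (monomialDerivOp m u)) ξ
        = (∏ j, (2 * ↑π * Complex.I * (ξ j : ℂ)) ^ (m j)) * 𝓕 (toE u) ξ := by
  suffices main : ∀ d : ℕ, ∀ m : Fin n →₀ ℕ, (∑ j, m j) ≤ d →
      ∀ ξ : EuclideanSpace ℝ (Fin n), 𝓕 (toE (monomialDerivOp m u)) ξ
        = (∏ j, (2 * ↑π * Complex.I * (ξ j : ℂ)) ^ (m j)) * 𝓕 (toE u) ξ by
    intro m ξ; exact main _ m le_rfl ξ
  intro d
  induction d with
  | zero =>
    intro m hm ξ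
    have hm0 : m = 0 := by
      ext j
      exact Nat.le_zero.1 (le_trans (Finset.single_le_sum
        (f := fun j => m j) (fun _ _ => Nat.zero_le _) (Finset.mem_univ j)) hm)
    subst hm0
    simp [monomialDerivOp_zero]
  | succ d ih =>
    intro m hm ξ
    rcases eq_or_ne m 0 with rfl | h0
    · simp [monomialDerivOp_zero]
    · obtain ⟨i, hi⟩ : ∃ i, m i ≠ 0 := by
        by_contra h
        push_neg at h
        exact h0 (Finsupp.ext h)
      set m' := m - Finsupp.single i 1 with hm'
      have hmm : m' + Finsupp.single i 1 = m := by
        ext j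
        rcases eq_or_ne j i with rfl | hji
        · simp [hm', Finsupp.single_apply, Nat.sub_add_cancel (Nat.one_le_iff_ne_zero.2 hi)]
        · simp [hm', Finsupp.single_apply, Ne.symm hji]
      have hsum : (∑ j, m j) = (∑ j, m' j) + 1 := by
        rw [← hmm]
        simp only [Finsupp.add_apply]
        rw [Finset.sum_add_distrib]
        congr 1
        simp [Finsupp.single_apply]
      have hd' : (∑ j, m' j) ≤ d := by omega
      have hdint : ∀ k, Integrable (partialDeriv' k (monomialDerivOp m' u)) := by
        intro k
        rw [← monomialDerivOp_add_single hu m' k]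
        exact hint _
      calc 𝓕 (toE (monomialDerivOp m u)) ξ
          = 𝓕 (toE (partialDeriv' i (monomialDerivOp m' u))) ξ := by
            rw [← hmm, monomialDerivOp_add_single hu m' i]
        _ = (2 * ↑π * Complex.I * (ξ i : ℂ)) * 𝓕 (toE (monomialDerivOp m' u)) ξ :=
            fourier_partial (contDiff_monomialDerivOp m' hu) (hint m') hdint i ξ
        _ = (2 * ↑π * Complex.I * (ξ i : ℂ)) *
              ((∏ j, (2 * ↑π * Complex.I * (ξ j : ℂ)) ^ (m' j)) * 𝓕 (toE u) ξ) := by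
            rw [ih m' hd' ξ]
        _ = (∏ j, (2 * ↑π * Complex.I * (ξ j : ℂ)) ^ (m j)) * 𝓕 (toE u) ξ := by
            rw [← hmm]
            have : (∏ j, (2 * ↑π * Complex.I * (ξ j : ℂ)) ^
                ((m' + Finsupp.single i 1 : Fin n →₀ ℕ) j))
                = (2 * ↑π * Complex.I * (ξ i : ℂ)) *
                  ∏ j, (2 * ↑π * Complex.I * (ξ j : ℂ)) ^ (m' j) := by
              simp only [Finsupp.add_apply, pow_add, Finset.prod_mul_distrib]
              rw [mul_comm]
              congr 1
              simp [Finsupp.single_apply, pow_ite]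
            rw [this]
            ring

theorem fourier_sum {ι : Type*} (s : Finset ι) (F : ι → EuclideanSpace ℝ (Fin n) → ℂ)
    (hF : ∀ i ∈ s, Integrable (F i)) (ξ : EuclideanSpace ℝ (Fin n)) :
    𝓕 (fun x => ∑ i ∈ s, F i x) ξ = ∑ i ∈ s, 𝓕 (F i) ξ := by
  simp_rw [Real.fourier_eq, Finset.smul_sum]
  exact integral_finset_sum s fun i hi =>
    (Real.fourierIntegral_convergent_iff ξ).2 (hF i hi)

theorem fourier_const_mul (c : ℂ) (F : EuclideanSpace ℝ (Fin n) → ℂ)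
    (ξ : EuclideanSpace ℝ (Fin n)) :
    𝓕 (fun x => c * F x) ξ = c * 𝓕 F ξ := by
  rw [Real.fourier_eq, Real.fourier_eq, ← MeasureTheory.integral_const_mul]
  congr 1
  funext v
  rw [Circle.smul_def, Circle.smul_def, smul_eq_mul, smul_eq_mul]
  ring


open Complex Real in
theorem prod_factor (x : Fin n → ℝ) (m : Fin n →₀ ℕ) :
    (∏ j, (2 * ↑π * Complex.I * (x j : ℂ)) ^ (m j))
      = ((((2*π)^(∑ j, m j) * ∏ j, x j ^ m j : ℝ)) : ℂ) * Complex.I ^ (∑ j, m j) := by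
  have h1 : ∀ j : Fin n, (2 * ↑π * Complex.I * (x j : ℂ)) ^ (m j)
      = ((((2*π) * x j : ℝ)) : ℂ) ^ (m j) * Complex.I ^ (m j) := by
    intro j; rw [← mul_pow]; congr 1; push_cast; ring
  rw [Finset.prod_congr rfl fun j _ => h1 j, Finset.prod_mul_distrib,
    Finset.prod_pow_eq_pow_sum]
  congr 1
  have h2 : ((2*π)^(∑ j, m j) * ∏ j, x j ^ m j : ℝ) = ∏ j, ((2*π) * x j) ^ (m j) := by
    rw [← Finset.prod_pow_eq_pow_sum, ← Finset.prod_mul_distrib]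
    exact Finset.prod_congr rfl fun j _ => (mul_pow _ _ _).symm
  rw [h2]
  push_cast
  rfl

open Complex Real in
theorem poly_zero_of_eval (P : MvPolynomial (Fin n) ℝ) (hP : P ≠ 0)
    (h : ∀ ξ : EuclideanSpace ℝ (Fin n),
      ∑ m ∈ P.support, ((P.coeff m : ℝ) : ℂ) * ∏ j, (2 * ↑π * Complex.I * (ξ j : ℂ)) ^ (m j) = 0) :
    False := by
  have hx : ∀ x : Fin n → ℝ, ∑ m ∈ P.support, (((P.coeff m : ℝ) : ℂ) *
      ((((2*π)^(∑ j, m j) * ∏ j, x j ^ m j : ℝ)) : ℂ) * Complex.I ^ (∑ j, m j)) = 0 := by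
    intro x
    have h0 := h ((WithLp.equiv 2 (Fin n → ℝ)).symm x)
    simp only [WithLp.equiv_symm_apply, WithLp.ofLp_toLp] at h0
    rw [← h0]
    refine Finset.sum_congr rfl fun m _ => ?_
    rw [prod_factor x m]
    ring
  -- real and imaginary part polynomials
  set A : MvPolynomial (Fin n) ℝ := ∑ m ∈ P.support,
    MvPolynomial.monomial m (P.coeff m * (2*π)^(∑ j, m j) * (Complex.I ^ (∑ j, m j)).re) with hA
  set B : MvPolynomial (Fin n) ℝ := ∑ m ∈ P.support,
    MvPolynomial.monomial m (P.coeff m * (2*π)^(∑ j, m j) * (Complex.I ^ (∑ j, m j)).im) with hB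
  have hAeval : ∀ x : Fin n → ℝ, MvPolynomial.eval x A = 0 := by
    intro x
    have : MvPolynomial.eval x A = (∑ m ∈ P.support, (((P.coeff m : ℝ) : ℂ) *
        ((((2*π)^(∑ j, m j) * ∏ j, x j ^ m j : ℝ)) : ℂ) * Complex.I ^ (∑ j, m j))).re := by
      rw [hA, map_sum, Complex.re_sum]
      refine Finset.sum_congr rfl fun m _ => ?_
      rw [MvPolynomial.eval_monomial, Finsupp.prod_pow, ← Complex.ofReal_mul,
        Complex.re_ofReal_mul]
      ring
    rw [this, hx x, Complex.zero_re]
  have hBeval : ∀ x : Fin n → ℝ, MvPolynomial.eval x B = 0 := by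
    intro x
    have : MvPolynomial.eval x B = (∑ m ∈ P.support, (((P.coeff m : ℝ) : ℂ) *
        ((((2*π)^(∑ j, m j) * ∏ j, x j ^ m j : ℝ)) : ℂ) * Complex.I ^ (∑ j, m j))).im := by
      rw [hB, map_sum, Complex.im_sum]
      refine Finset.sum_congr rfl fun m _ => ?_
      rw [MvPolynomial.eval_monomial, Finsupp.prod_pow, ← Complex.ofReal_mul,
        Complex.im_ofReal_mul]
      ring
    rw [this, hx x, Complex.zero_im]
  have hA0 : A = 0 := MvPolynomial.funext fun x => by rw [hAeval x]; simp
  have hB0 : B = 0 := MvPolynomial.funext fun x => by rw [hBeval x]; simp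
  obtain ⟨m₀, hm₀⟩ := (MvPolynomial.support_nonempty.2 hP)
  have hcA : MvPolynomial.coeff m₀ A
      = P.coeff m₀ * (2*π)^(∑ j, m₀ j) * (Complex.I ^ (∑ j, m₀ j)).re := by
    rw [hA, MvPolynomial.coeff_sum]
    simp only [MvPolynomial.coeff_monomial]
    rw [Finset.sum_ite_eq' P.support m₀]
    exact if_pos hm₀
  have hcB : MvPolynomial.coeff m₀ B
      = P.coeff m₀ * (2*π)^(∑ j, m₀ j) * (Complex.I ^ (∑ j, m₀ j)).im := by
    rw [hB, MvPolynomial.coeff_sum]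
    simp only [MvPolynomial.coeff_monomial]
    rw [Finset.sum_ite_eq' P.support m₀]
    exact if_pos hm₀
  rw [hA0] at hcA
  rw [hB0] at hcB
  simp only [MvPolynomial.coeff_zero] at hcA hcB
  have hre2 : (Complex.I ^ (∑ j, m₀ j)).re ^ 2 + (Complex.I ^ (∑ j, m₀ j)).im ^ 2 = 1 := by
    have : Complex.normSq (Complex.I ^ (∑ j, m₀ j)) = 1 := by
      rw [map_pow, Complex.normSq_I, one_pow]
    rw [← this, Complex.normSq_apply]
    ring
  have hc0 : P.coeff m₀ * (2*π)^(∑ j, m₀ j) = 0 := by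
    have : P.coeff m₀ * (2*π)^(∑ j, m₀ j) * ((Complex.I ^ (∑ j, m₀ j)).re ^ 2
        + (Complex.I ^ (∑ j, m₀ j)).im ^ 2) = 0 := by
      linear_combination (Complex.I ^ (∑ j, m₀ j)).re * hcA.symm
        + (Complex.I ^ (∑ j, m₀ j)).im * hcB.symm
    rwa [hre2, mul_one] at this
  have hpow : (2*π)^(∑ j, m₀ j) ≠ 0 := pow_ne_zero _ (by positivity)
  exact (MvPolynomial.mem_support_iff.1 hm₀) (by
    rcases mul_eq_zero.1 hc0 with h | h
    · exact h
    · exact absurd h hpow)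


open Complex Real in
theorem fourier_poly {u : (Fin n → ℝ) → ℝ} (hu : ContDiff ℝ (⊤ : ℕ∞) u)
    (hint : ∀ m : Fin n →₀ ℕ, Integrable (monomialDerivOp m u))
    (P : MvPolynomial (Fin n) ℝ)
    (hPu : ∀ x, polyDerivOp P u x = 0) (ξ : EuclideanSpace ℝ (Fin n)) :
    (∑ m ∈ P.support, ((P.coeff m : ℝ) : ℂ) * ∏ j, (2 * ↑π * Complex.I * (ξ j : ℂ)) ^ (m j)) *
      𝓕 (toE u) ξ = 0 := by
  have hzero : 𝓕 (toE (polyDerivOp P u)) ξ = 0 := by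
    have h0 : toE (polyDerivOp P u) = fun _ => (0 : ℂ) := funext fun x => by
      simp [toE, hPu]
    rw [h0, Real.fourier_eq]
    simp
  have hsplit : toE (polyDerivOp P u) = fun x => ∑ m ∈ P.support,
      ((P.coeff m : ℝ) : ℂ) * toE (monomialDerivOp m u) x := by
    funext x
    simp only [toE, polyDerivOp]
    push_cast
    rfl
  rw [hsplit] at hzero
  rw [fourier_sum P.support _ (fun m _ => (integrable_toE (hint m)).const_mul _) ξ] at hzero
  rw [← hzero, Finset.sum_mul]
  refine Finset.sum_congr rfl fun m _ => ?_
  rw [fourier_const_mul, fourier_monomial hu hint m ξ]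
  ring

open Complex Real in
theorem analytic_Q (P : MvPolynomial (Fin n) ℝ) :
    AnalyticOnNhd ℝ (fun ξ : EuclideanSpace ℝ (Fin n) => ∑ m ∈ P.support,
      ((P.coeff m : ℝ) : ℂ) * ∏ j, (2 * ↑π * Complex.I * (ξ j : ℂ)) ^ (m j)) Set.univ := by
  apply Finset.analyticOnNhd_fun_sum
  intro m _
  apply AnalyticOnNhd.mul analyticOnNhd_const
  apply Finset.analyticOnNhd_fun_prod
  intro j _
  apply AnalyticOnNhd.pow
  apply AnalyticOnNhd.mul analyticOnNhd_const
  intro x _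
  exact (Complex.ofRealCLM.comp (EuclideanSpace.proj (𝕜 := ℝ) j)).analyticAt x

end Aux

theorem stmt0 {n : ℕ} (u : (Fin n → ℝ) → ℝ)
    (hu : ContDiff ℝ (⊤ : ℕ∞) u)
    (hint : ∀ m : Fin n →₀ ℕ, Integrable (monomialDerivOp m u))
    (P : MvPolynomial (Fin n) ℝ) (hP : P ≠ 0)
    (hPu : ∀ x, polyDerivOp P u x = 0) :
    ∀ x, u x = 0 := by
  intro x₀
  have hui : Integrable u := by simpa [monomialDerivOp_zero] using hint 0
  have hG : Integrable (toE u) := integrable_toE hui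
  set Φ : EuclideanSpace ℝ (Fin n) → ℂ := 𝓕 (toE u) with hΦ
  set Q : EuclideanSpace ℝ (Fin n) → ℂ := fun ξ => ∑ m ∈ P.support,
    ((P.coeff m : ℝ) : ℂ) * ∏ j, (2 * ↑Real.pi * Complex.I * (ξ j : ℂ)) ^ (m j) with hQ
  have hmul : ∀ ξ, Q ξ * Φ ξ = 0 := fun ξ => fourier_poly hu hint P hPu ξ
  have hΦ0 : ∀ ξ, Φ ξ = 0 := by
    by_contra hc
    push_neg at hc
    obtain ⟨ξ₀, hξ₀⟩ := hc
    have hcont : Continuous Φ := by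
      exact VectorFourier.fourierIntegral_continuous Real.continuous_fourierChar
        (by exact continuous_inner) hG
    have hev : Q =ᶠ[nhds ξ₀] 0 := by
      filter_upwards [hcont.continuousAt.eventually_ne hξ₀] with ξ hξ
      have := hmul ξ
      rcases mul_eq_zero.1 this with h | h
      · exact h
      · exact absurd h hξ
    have hQ0 := (analytic_Q P).eqOn_zero_of_preconnected_of_eventuallyEq_zero
      isPreconnected_univ (Set.mem_univ ξ₀) hev
    exact poly_zero_of_eval P hP fun ξ => hQ0 (Set.mem_univ ξ)
  have hFT0 : 𝓕 (toE u) = (0 : EuclideanSpace ℝ (Fin n) → ℂ) := funext hΦ0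
  have hinv := (contDiff_toE hu).continuous.fourierInv_fourier_eq hG
    (by rw [hFT0]; exact integrable_zero _ _ _)
  rw [hFT0] at hinv
  have hzero : toE u = fun _ => (0 : ℂ) := by
    rw [← hinv]
    funext v
    rw [Real.fourierInv_eq]
    simp
  have := congrFun hzero ((WithLp.equiv 2 (Fin n → ℝ)).symm x₀)
  simpa [toE] using this
end

section
/- For x > 0 and λ ∈ ℝ with λ² ≠ x, the pointwise limit lim_{ε→0⁺} (ε − iλ)/√((ε − iλ)² + x) equals |λ|/√(λ² − x) if λ² > x, and equals −i λ/√(x − λ²) if λ² < x, where the square root is the principal branch. -/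
/-!
Write w = ε - iλ. The numerator tends to -iλ, and w² + x tends to the real number x - λ² with
Im (w² + x) = -2ελ. If λ² < x the principal square root is continuous at that limit. If λ² > x the
limit lies on the branch cut, and the sign of λ decides from which side it is approached: from
above (λ ≤ 0) the square root tends to i√(λ² - x), from below (λ > 0) to -i√(λ² - x). Either way
the quotient tends to |λ|/√(λ² - x).
-/

open Filter Topology

namespace Complex

open Real

theorem continuousWithinAt_cpow_const_of_re_neg_of_im_zero {z : ℂ} (hre : z.re < 0)
    (him : z.im = 0) (s : ℂ) : ContinuousWithinAt (· ^ s) {w : ℂ | 0 ≤ w.im} z := by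
  have hz : z ≠ 0 := fun h => by simp [h] at hre
  refine (continuous_exp.continuousAt.comp_continuousWithinAt
    ((continuousWithinAt_log_of_re_neg_of_im_zero hre him).mul continuousWithinAt_const))
      |>.congr_of_eventuallyEq ?_ (cpow_def_of_ne_zero hz s)
  filter_upwards [nhdsWithin_le_nhds (eventually_ne_nhds hz)] with w hw
  exact cpow_def_of_ne_zero hw s

theorem tendsto_cpow_const_nhdsWithin_im_neg_of_re_neg_of_im_zero {z : ℂ} (hre : z.re < 0)
    (him : z.im = 0) (s : ℂ) :
    Tendsto (· ^ s) (𝓝[{w : ℂ | w.im < 0}] z) (𝓝 (exp ((Real.log ‖z‖ - π * I) * s))) := by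
  have hz : z ≠ 0 := fun h => by simp [h] at hre
  refine (continuous_exp.tendsto _).comp
    ((tendsto_log_nhdsWithin_im_neg_of_re_neg_of_im_zero hre him).mul_const s)
      |>.congr' (f₁ := fun w => exp (log w * s)) ?_
  filter_upwards [nhdsWithin_le_nhds (eventually_ne_nhds hz)] with w hw
  exact (cpow_def_of_ne_zero hw s).symm

theorem ofReal_cpow_one_half {c : ℝ} (hc : 0 ≤ c) : (c : ℂ) ^ (1 / 2 : ℂ) = √c := by
  rw [Real.sqrt_eq_rpow, ofReal_cpow hc]
  norm_num

theorem tendsto_cpow_one_half_nhdsWithin_im_nonneg_of_neg {c : ℝ} (hc : c < 0) :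
    Tendsto (· ^ (1 / 2 : ℂ)) (𝓝[{w : ℂ | 0 ≤ w.im}] (c : ℂ)) (𝓝 (I * √(-c))) := by
  have h := continuousWithinAt_cpow_const_of_re_neg_of_im_zero (z := c) (by simpa) rfl (1 / 2)
  rwa [ContinuousWithinAt, ofReal_cpow_of_nonpos hc.le, ← ofReal_neg,
    ofReal_cpow_one_half (by linarith), mul_comm, show (π : ℂ) * I * (1 / 2) = π / 2 * I by ring,
    exp_pi_div_two_mul_I] at h

theorem tendsto_cpow_one_half_nhdsWithin_im_neg_of_neg {c : ℝ} (hc : c < 0) :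
    Tendsto (· ^ (1 / 2 : ℂ)) (𝓝[{w : ℂ | w.im < 0}] (c : ℂ)) (𝓝 (-I * √(-c))) := by
  have h := tendsto_cpow_const_nhdsWithin_im_neg_of_re_neg_of_im_zero (z := c) (by simpa) rfl
    (1 / 2)
  have hc' : ((-c : ℝ) : ℂ) ≠ 0 := by simpa using hc.ne
  rwa [sub_mul, exp_sub, norm_real, Real.norm_of_nonpos hc.le, ofReal_log (by linarith),
    ← cpow_def_of_ne_zero hc', ofReal_cpow_one_half (by linarith),
    show (π : ℂ) * I * (1 / 2) = π / 2 * I by ring, exp_pi_div_two_mul_I, div_I, mul_comm _ I,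
    ← neg_mul] at h

end Complex

section

open Complex

variable (x lam : ℝ)

theorem tendsto_sub_I_mul_sq_add :
    Tendsto (fun ε : ℝ => ((ε : ℂ) - I * lam) ^ 2 + x) (𝓝 0) (𝓝 ((x - lam ^ 2 : ℝ) : ℂ)) := by
  have h : Continuous (fun ε : ℝ => ((ε : ℂ) - I * lam) ^ 2 + x) := by fun_prop
  convert h.tendsto 0 using 2
  push_cast
  linear_combination -(lam : ℂ) ^ 2 * I_sq

theorem im_sub_I_mul_sq_add (ε : ℝ) : (((ε : ℂ) - I * lam) ^ 2 + x).im = -(2 * ε * lam) := by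
  simp only [sq, add_im, mul_im, sub_re, sub_im, ofReal_re, ofReal_im, mul_re, I_re, I_im,
    zero_mul, mul_zero, one_mul, sub_self, sub_zero, zero_sub, zero_add, add_zero, mul_neg, neg_mul]
  ring

theorem tendsto_sub_I_mul_sq_add_nhdsWithin_im_nonneg (hlam : lam ≤ 0) :
    Tendsto (fun ε : ℝ => ((ε : ℂ) - I * lam) ^ 2 + x) (𝓝[>] 0)
      (𝓝[{w : ℂ | 0 ≤ w.im}] ((x - lam ^ 2 : ℝ) : ℂ)) := by
  refine tendsto_nhdsWithin_iff.2
    ⟨(tendsto_sub_I_mul_sq_add x lam).mono_left nhdsWithin_le_nhds, ?_⟩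
  filter_upwards [self_mem_nhdsWithin] with ε (hε : 0 < ε)
  rw [im_sub_I_mul_sq_add]
  nlinarith

theorem tendsto_sub_I_mul_sq_add_nhdsWithin_im_neg (hlam : 0 < lam) :
    Tendsto (fun ε : ℝ => ((ε : ℂ) - I * lam) ^ 2 + x) (𝓝[>] 0)
      (𝓝[{w : ℂ | w.im < 0}] ((x - lam ^ 2 : ℝ) : ℂ)) := by
  refine tendsto_nhdsWithin_iff.2
    ⟨(tendsto_sub_I_mul_sq_add x lam).mono_left nhdsWithin_le_nhds, ?_⟩
  filter_upwards [self_mem_nhdsWithin] with ε (hε : 0 < ε)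
  rw [im_sub_I_mul_sq_add]
  nlinarith

theorem tendsto_sub_I_mul :
    Tendsto (fun ε : ℝ => (ε : ℂ) - I * lam) (𝓝[>] 0) (𝓝 (-(I * lam))) := by
  have h : Continuous (fun ε : ℝ => (ε : ℂ) - I * lam) := by fun_prop
  simpa using (h.tendsto 0).mono_left nhdsWithin_le_nhds

theorem tendsto_div_cpow_one_half_of_sq_lt (hlt : lam ^ 2 < x) :
    Tendsto (fun ε : ℝ => ((ε : ℂ) - I * lam) / (((ε : ℂ) - I * lam) ^ 2 + x) ^ (1 / 2 : ℂ))
      (𝓝[>] 0) (𝓝 (-(I * lam) / √(x - lam ^ 2))) := by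
  have hc : 0 < x - lam ^ 2 := by linarith
  refine (tendsto_sub_I_mul lam).div ?_ (by exact_mod_cast (Real.sqrt_pos.2 hc).ne')
  rw [← ofReal_cpow_one_half hc.le]
  exact (continuousAt_cpow_const (ofReal_mem_slitPlane.2 hc)).tendsto.comp
    ((tendsto_sub_I_mul_sq_add x lam).mono_left nhdsWithin_le_nhds)

theorem tendsto_div_cpow_one_half_of_lt_sq (hgt : x < lam ^ 2) :
    Tendsto (fun ε : ℝ => ((ε : ℂ) - I * lam) / (((ε : ℂ) - I * lam) ^ 2 + x) ^ (1 / 2 : ℂ))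
      (𝓝[>] 0) (𝓝 (|lam| / √(lam ^ 2 - x))) := by
  have hc : x - lam ^ 2 < 0 := by linarith
  have hsqrt : (√(-(x - lam ^ 2)) : ℂ) ≠ 0 := by
    exact_mod_cast (Real.sqrt_pos.2 (by linarith)).ne'
  rcases le_or_gt lam 0 with hlam | hlam
  · have hlim : (|lam| / √(lam ^ 2 - x) : ℂ) = -(I * lam) / (I * √(-(x - lam ^ 2))) := by
      rw [neg_sub, abs_of_nonpos hlam]
      field_simp
      push_cast
      ring
    rw [hlim]
    exact (tendsto_sub_I_mul lam).div ((tendsto_cpow_one_half_nhdsWithin_im_nonneg_of_neg hc).comp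
      (tendsto_sub_I_mul_sq_add_nhdsWithin_im_nonneg x lam hlam)) (mul_ne_zero I_ne_zero hsqrt)
  · have hlim : (|lam| / √(lam ^ 2 - x) : ℂ) = -(I * lam) / (-I * √(-(x - lam ^ 2))) := by
      rw [neg_sub, abs_of_pos hlam]
      field_simp
    rw [hlim]
    exact (tendsto_sub_I_mul lam).div ((tendsto_cpow_one_half_nhdsWithin_im_neg_of_neg hc).comp
      (tendsto_sub_I_mul_sq_add_nhdsWithin_im_neg x lam hlam))
      (mul_ne_zero (neg_ne_zero.2 I_ne_zero) hsqrt)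

end

theorem stmt8_general (x lam : ℝ) :
    (lam ^ 2 > x →
      Tendsto (fun ε : ℝ =>
          ((ε : ℂ) - Complex.I * lam) / (((ε : ℂ) - Complex.I * lam) ^ 2 + x) ^ (1 / 2 : ℂ))
        (nhdsWithin 0 (Set.Ioi 0))
        (nhds ((|lam| : ℝ) / (Real.sqrt (lam ^ 2 - x) : ℝ))))
    ∧ (lam ^ 2 < x →
      Tendsto (fun ε : ℝ =>
          ((ε : ℂ) - Complex.I * lam) / (((ε : ℂ) - Complex.I * lam) ^ 2 + x) ^ (1 / 2 : ℂ))
        (nhdsWithin 0 (Set.Ioi 0))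
        (nhds (-(Complex.I * lam) / (Real.sqrt (x - lam ^ 2) : ℝ)))) :=
  ⟨tendsto_div_cpow_one_half_of_lt_sq x lam, tendsto_div_cpow_one_half_of_sq_lt x lam⟩

theorem stmt8 (x lam : ℝ) (hx : 0 < x) (hne : lam ^ 2 ≠ x) :
    (lam ^ 2 > x →
      Tendsto (fun ε : ℝ =>
          ((ε : ℂ) - Complex.I * lam) / (((ε : ℂ) - Complex.I * lam) ^ 2 + x) ^ (1 / 2 : ℂ))
        (nhdsWithin 0 (Set.Ioi 0))
        (nhds ((|lam| : ℝ) / (Real.sqrt (lam ^ 2 - x) : ℝ))))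
    ∧ (lam ^ 2 < x →
      Tendsto (fun ε : ℝ =>
          ((ε : ℂ) - Complex.I * lam) / (((ε : ℂ) - Complex.I * lam) ^ 2 + x) ^ (1 / 2 : ℂ))
        (nhdsWithin 0 (Set.Ioi 0))
        (nhds (-(Complex.I * lam) / (Real.sqrt (x - lam ^ 2) : ℝ)))) :=
  stmt8_general x lam
end

section
/- (Andreief/Heine identity) Let μ be a measure on a measurable space E and let φ₁,…,φ_n, ψ₁,…,ψ_n : E → ℂ be measurable functions such that all products φ_j ψ_k are μ-integrable. Then ∫_{Eⁿ} det[φ_j(s_k)]_{j,k=1}^n · det[ψ_j(s_k)]_{j,k=1}^n dμ(s₁)···dμ(s_n) = n! · det[ ∫_E φ_j(s) ψ_k(s) dμ(s) ]_{j,k=1}^n. -/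
/-!
Expanding both determinants by the Leibniz formula writes the integrand as a signed sum, over pairs
of permutations `(σ, τ)`, of products `∏ k, φ (σ k) (s k) * ψ (τ k) (s k)`. By Fubini each term
integrates to `∏ k, A (σ k) (τ k)`, where `A j k = ∫ φ j * ψ k`. For fixed `σ`, reindexing the
product along `σ` turns the sum over `τ` into `det A`, so the `n!` choices of `σ` give `n! * det A`.
-/

open MeasureTheory Equiv

namespace Matrix

variable {ι R : Type*} [Fintype ι] [DecidableEq ι] [CommRing R]

theorem det_mul_det_eq_sum_perm_perm (M N : Matrix ι ι R) :
    M.det * N.det =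
      ∑ σ : Perm ι, ∑ τ : Perm ι, (Perm.sign σ * Perm.sign τ) • ∏ k, M (σ k) k * N (τ k) k := by
  simp_rw [det_apply, Finset.sum_mul_sum, smul_mul_smul_comm, Finset.prod_mul_distrib]

theorem sum_perm_sign_smul_prod_apply (A : Matrix ι ι R) (σ : Perm ι) :
    ∑ τ : Perm ι, (Perm.sign σ * Perm.sign τ) • ∏ k, A (σ k) (τ k) = A.det := by
  calc ∑ τ : Perm ι, (Perm.sign σ * Perm.sign τ) • ∏ k, A (σ k) (τ k)
      = Perm.sign σ • ∑ τ : Perm ι, Perm.sign τ • ∏ k, (A.submatrix σ id)ᵀ (τ k) k := by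
        simp only [Finset.smul_sum, mul_smul, transpose_apply, submatrix_apply, id]
    _ = Perm.sign σ • (A.submatrix σ id).det := by rw [← det_apply, det_transpose]
    _ = A.det := by
        rw [det_permute, ← zsmul_eq_mul, ← Units.smul_def, smul_smul, Int.units_mul_self, one_smul]

theorem sum_perm_perm_sign_smul_prod_apply (A : Matrix ι ι R) :
    ∑ σ : Perm ι, ∑ τ : Perm ι, (Perm.sign σ * Perm.sign τ) • ∏ k, A (σ k) (τ k) =
      (Fintype.card ι).factorial * A.det := by
  simp only [sum_perm_sign_smul_prod_apply, Finset.sum_const, Finset.card_univ, Fintype.card_perm,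
    nsmul_eq_mul]

end Matrix

theorem stmt10_general {E : Type*} [MeasurableSpace E] (μ : Measure E) [SigmaFinite μ]
    {n : ℕ} (φ ψ : Fin n → E → ℂ)
    (hint : ∀ j k, Integrable (fun s => φ j s * ψ k s) μ) :
    (∫ s : Fin n → E,
        (Matrix.of fun j k : Fin n => φ j (s k)).det
          * (Matrix.of fun j k : Fin n => ψ j (s k)).det
        ∂(Measure.pi fun _ : Fin n => μ))
      = (n.factorial : ℂ)
        * (Matrix.of fun j k : Fin n => ∫ s, φ j s * ψ k s ∂μ).det := by
  have hterm (σ τ : Perm (Fin n)) : Integrable (fun s : Fin n → E => (Perm.sign σ * Perm.sign τ) •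
      ∏ k, φ (σ k) (s k) * ψ (τ k) (s k)) (Measure.pi fun _ => μ) :=
    (Integrable.fintype_prod (f := fun k s => φ (σ k) s * ψ (τ k) s) fun k => hint _ _).smul _
  simp_rw [Matrix.det_mul_det_eq_sum_perm_perm, Matrix.of_apply]
  rw [integral_finsetSum _ fun σ _ => integrable_finsetSum _ fun τ _ => hterm σ τ]
  calc _ = ∑ σ : Perm (Fin n), ∑ τ : Perm (Fin n), (Perm.sign σ * Perm.sign τ) •
        ∏ k, (Matrix.of fun j k : Fin n => ∫ s, φ j s * ψ k s ∂μ) (σ k) (τ k) := by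
        refine Finset.sum_congr rfl fun σ _ => ?_
        rw [integral_finsetSum _ fun τ _ => hterm σ τ]
        refine Finset.sum_congr rfl fun τ _ => ?_
        simp only [Units.smul_def, zsmul_eq_mul, integral_const_mul]
        rw [integral_fintype_prod_eq_prod (f := fun k s => φ (σ k) s * ψ (τ k) s)]
        rfl
    _ = _ := by rw [Matrix.sum_perm_perm_sign_smul_prod_apply, Fintype.card_fin]

/-- **Andreief/Heine identity.** -/
theorem stmt10 {E : Type*} [MeasurableSpace E] (μ : Measure E) [SigmaFinite μ]
    {n : ℕ} (φ ψ : Fin n → E → ℂ)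
    (hφ : ∀ j, Measurable (φ j)) (hψ : ∀ j, Measurable (ψ j))
    (hint : ∀ j k, Integrable (fun s => φ j s * ψ k s) μ) :
    (∫ s : Fin n → E,
        (Matrix.of fun j k : Fin n => φ j (s k)).det
          * (Matrix.of fun j k : Fin n => ψ j (s k)).det
        ∂(Measure.pi fun _ : Fin n => μ))
      = (n.factorial : ℂ)
        * (Matrix.of fun j k : Fin n => ∫ s, φ j s * ψ k s ∂μ).det :=
  stmt10_general μ φ ψ hint
end
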